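/- arXiv:1906.00313 — 2 statements merged into one kernel-verified Lean document; each statement's English description precedes it below -/
import Mathlib

section
/- For independent random variables U with law P on ℝ^d (E‖U‖ < ∞) and Z ∼ N(0,σ²I), the density m(x) of U + Z satisfies ‖∇ log m(x)‖ ≤ (1/σ²)(‖x‖ + E‖U‖) for all x. -/
open MeasureTheory

/-- The isotropic Gaussian density of `N(0, σ²I)` on `ℝ^d`. -/
noncomputable def gaussPdf (d : ℕ) (σ : ℝ) (x : EuclideanSpace ℝ (Fin d)) : ℝ :=
  (2 * Real.pi * σ ^ 2) ^ (-(d : ℝ) / 2) * Real.exp (-‖x‖ ^ 2 / (2 * σ ^ 2))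

/-!
With `φ = gaussPdf d σ`, differentiation under the integral gives
`∇m(x) = -σ⁻² ∫ φ(x - a) (x - a) dP(a)`, hence
`‖∇ log m(x)‖ ≤ σ⁻² ∫ ‖x - a‖ φ(x - a) dP(a) / ∫ φ(x - a) dP(a)`.
As `φ(x - a)` is a decreasing function of `‖x - a‖`, the two are negatively correlated under `P`
(Chebyshev's integral inequality), so this posterior mean of `‖x - U‖` is at most the prior mean
`E‖x - U‖ ≤ ‖x‖ + E‖U‖`.
-/

theorem Antivary.integral_mul_le_mul_integral {α : Type*} [MeasurableSpace α] {μ : Measure α}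
    [IsProbabilityMeasure μ] {f g : α → ℝ} (hfg : Antivary f g) (hf : Integrable f μ)
    (hg : Integrable g μ) (hfg_int : Integrable (fun a => f a * g a) μ) :
    ∫ a, f a * g a ∂μ ≤ (∫ a, f a ∂μ) * ∫ a, g a ∂μ := by
  -- integrate the rearrangement inequality `f i g i + f j g j ≤ f i g j + f j g i` in `i`, then `j`
  have inner_step (j : α) :
      ∫ i, f i * g i ∂μ + f j * g j ≤ (∫ i, f i ∂μ) * g j + f j * ∫ i, g i ∂μ := by
    have := integral_mono (hfg_int.add (integrable_const (f j * g j)))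
      ((hf.mul_const (g j)).add (hg.const_mul (f j)))
      (fun i => hfg.mul_add_mul_le_mul_add_mul i j)
    simp only [Pi.add_apply] at this
    rwa [integral_add hfg_int (integrable_const _), integral_add (hf.mul_const _)
      (hg.const_mul _), integral_const, integral_mul_const, integral_const_mul, probReal_univ,
      one_smul] at this
  have := integral_mono ((integrable_const _).add hfg_int)
    ((hg.const_mul _).add (hf.mul_const _)) inner_step
  simp only [Pi.add_apply] at this
  rw [integral_add (integrable_const _) hfg_int, integral_add (hg.const_mul _) (hf.mul_const _),
    integral_const, integral_mul_const, integral_const_mul, probReal_univ, one_smul] at this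
  linarith

theorem HasGradientAt.log {F : Type*} [NormedAddCommGroup F] [InnerProductSpace ℝ F]
    [CompleteSpace F] {f : F → ℝ} {f' x : F} (hf : HasGradientAt f f' x) (hx : f x ≠ 0) :
    HasGradientAt (fun y => Real.log (f y)) ((f x)⁻¹ • f') x := by
  rw [hasGradientAt_iff_hasFDerivAt, map_smulₛₗ]
  exact (hasGradientAt_iff_hasFDerivAt.1 hf).log hx

namespace gaussPdf

variable {d : ℕ} {σ : ℝ}

theorem nonneg (v : EuclideanSpace ℝ (Fin d)) : 0 ≤ gaussPdf d σ v :=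
  mul_nonneg (Real.rpow_nonneg (by positivity) _) (Real.exp_pos _).le

theorem pos (hσ : 0 < σ) (v : EuclideanSpace ℝ (Fin d)) : 0 < gaussPdf d σ v :=
  mul_pos (Real.rpow_pos_of_pos (by positivity) _) (Real.exp_pos _)

theorem le_of_norm_le {v w : EuclideanSpace ℝ (Fin d)} (h : ‖v‖ ≤ ‖w‖) :
    gaussPdf d σ w ≤ gaussPdf d σ v := by
  unfold gaussPdf
  gcongr

theorem antivary_norm : Antivary (gaussPdf d σ) norm :=
  fun _ _ h => le_of_norm_le h.le

theorem le_apply_zero (v : EuclideanSpace ℝ (Fin d)) : gaussPdf d σ v ≤ gaussPdf d σ 0 :=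
  le_of_norm_le (by simp)

theorem norm_le_apply_zero (v : EuclideanSpace ℝ (Fin d)) : ‖gaussPdf d σ v‖ ≤ gaussPdf d σ 0 :=
  (Real.norm_of_nonneg (nonneg v)).trans_le (le_apply_zero v)

theorem norm_mul_le (hσ : 0 < σ) (v : EuclideanSpace ℝ (Fin d)) :
    ‖v‖ * gaussPdf d σ v ≤ σ * gaussPdf d σ 0 := by
  have key : ‖v‖ * Real.exp (-‖v‖ ^ 2 / (2 * σ ^ 2)) ≤ σ := by
    rw [neg_div, Real.exp_neg, ← div_eq_mul_inv, div_le_iff₀ (Real.exp_pos _)]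
    calc ‖v‖ ≤ σ * (‖v‖ ^ 2 / (2 * σ ^ 2) + 1) := by
          field_simp
          nlinarith [sq_nonneg (‖v‖ - σ)]
      _ ≤ σ * Real.exp (‖v‖ ^ 2 / (2 * σ ^ 2)) := by
          gcongr
          exact Real.add_one_le_exp _
  calc ‖v‖ * gaussPdf d σ v
        = (2 * Real.pi * σ ^ 2) ^ (-(d : ℝ) / 2) * (‖v‖ * Real.exp (-‖v‖ ^ 2 / (2 * σ ^ 2))) := by
          unfold gaussPdf; ring
    _ ≤ (2 * Real.pi * σ ^ 2) ^ (-(d : ℝ) / 2) * σ := by gcongr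
    _ = σ * gaussPdf d σ 0 := by simp [gaussPdf, mul_comm]

theorem hasGradientAt (v : EuclideanSpace ℝ (Fin d)) :
    HasGradientAt (gaussPdf d σ) (-(gaussPdf d σ v / σ ^ 2) • v) v := by
  have h := (((hasStrictFDerivAt_norm_sq v).hasFDerivAt.const_mul (-(2 * σ ^ 2)⁻¹)).exp.const_mul
    ((2 * Real.pi * σ ^ 2) ^ (-(d : ℝ) / 2)))
  have hfun : gaussPdf d σ = fun w =>
      (2 * Real.pi * σ ^ 2) ^ (-(d : ℝ) / 2) * Real.exp (-(2 * σ ^ 2)⁻¹ * ‖w‖ ^ 2) := by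
    funext w
    unfold gaussPdf
    ring_nf
  rw [hasGradientAt_iff_hasFDerivAt, hfun]
  refine h.congr_fderiv ?_
  ext w
  simp
  ring

theorem hasGradientAt_sub (x a : EuclideanSpace ℝ (Fin d)) :
    HasGradientAt (fun y => gaussPdf d σ (y - a))
      (-(gaussPdf d σ (x - a) / σ ^ 2) • (x - a)) x := by
  rw [hasGradientAt_iff_hasFDerivAt]
  simpa [Function.comp_def] using
    (hasGradientAt (x - a)).hasFDerivAt.comp x ((hasFDerivAt_id x).sub_const a)

theorem norm_smul_self (v : EuclideanSpace ℝ (Fin d)) :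
    ‖-(gaussPdf d σ v / σ ^ 2) • v‖ = ‖v‖ * gaussPdf d σ v / σ ^ 2 := by
  rw [norm_smul, norm_neg, Real.norm_of_nonneg (div_nonneg (nonneg v) (sq_nonneg σ))]
  ring

theorem norm_smul_self_le (hσ : 0 < σ) (v : EuclideanSpace ℝ (Fin d)) :
    ‖-(gaussPdf d σ v / σ ^ 2) • v‖ ≤ gaussPdf d σ 0 / σ := by
  rw [norm_smul_self]
  calc ‖v‖ * gaussPdf d σ v / σ ^ 2 ≤ σ * gaussPdf d σ 0 / σ ^ 2 := by
        gcongr ?_ / _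
        exact norm_mul_le hσ v
    _ = gaussPdf d σ 0 / σ := by field_simp

@[fun_prop]
theorem continuous : Continuous (gaussPdf d σ) := by
  unfold gaussPdf
  fun_prop

end gaussPdf

section smoothing

variable {d : ℕ} {σ : ℝ} (P : Measure (EuclideanSpace ℝ (Fin d)))

theorem integrable_gaussPdf_sub [IsFiniteMeasure P] (x : EuclideanSpace ℝ (Fin d)) :
    Integrable (fun a => gaussPdf d σ (x - a)) P :=
  .of_bound (by fun_prop : Continuous _).aestronglyMeasurable (gaussPdf d σ 0) <| ae_of_all _
    fun a => gaussPdf.norm_le_apply_zero _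

theorem hasGradientAt_integral_gaussPdf_sub [IsFiniteMeasure P] (hσ : 0 < σ)
    (x : EuclideanSpace ℝ (Fin d)) :
    HasGradientAt (fun y => ∫ a, gaussPdf d σ (y - a) ∂P)
      (∫ a, -(gaussPdf d σ (x - a) / σ ^ 2) • (x - a) ∂P) x := by
  have hG_cont (y : EuclideanSpace ℝ (Fin d)) :
      Continuous fun a => -(gaussPdf d σ (y - a) / σ ^ 2) • (y - a) := by fun_prop
  have hG_int : Integrable (fun a => -(gaussPdf d σ (x - a) / σ ^ 2) • (x - a)) P :=
    .of_bound (hG_cont x).aestronglyMeasurable _ <| ae_of_all _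
      fun a => gaussPdf.norm_smul_self_le hσ _
  have h := hasFDerivAt_integral_of_dominated_of_fderiv_le (μ := P) (x₀ := x)
    (F' := fun y a => innerSL ℝ (-(gaussPdf d σ (y - a) / σ ^ 2) • (y - a)))
    (bound := fun _ => gaussPdf d σ 0 / σ) Filter.univ_mem
    (.of_forall fun y => (integrable_gaussPdf_sub P y).aestronglyMeasurable)
    (integrable_gaussPdf_sub P x)
    ((innerSL ℝ).continuous.comp (hG_cont x)).aestronglyMeasurable
    (ae_of_all _ fun a y _ =>
      (innerSL_apply_norm ℝ _).trans_le (gaussPdf.norm_smul_self_le hσ _))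
    (integrable_const _)
    (ae_of_all _ fun a y _ => (gaussPdf.hasGradientAt_sub y a).hasFDerivAt)
  rwa [(innerSL ℝ).integral_comp_comm hG_int] at h

theorem integral_gaussPdf_sub_pos [IsFiniteMeasure P] [NeZero P] (hσ : 0 < σ)
    (x : EuclideanSpace ℝ (Fin d)) :
    0 < ∫ a, gaussPdf d σ (x - a) ∂P := by
  have hsupp : Function.support (fun a => gaussPdf d σ (x - a)) = Set.univ :=
    Set.eq_univ_of_forall fun a => (gaussPdf.pos hσ _).ne'
  rw [integral_pos_iff_support_of_nonneg (fun a => gaussPdf.nonneg _)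
    (integrable_gaussPdf_sub P x), hsupp]
  simp [NeZero.ne P]

theorem integral_norm_sub_mul_gaussPdf_sub_le [IsProbabilityMeasure P]
    (hP1 : Integrable (fun y => ‖y‖) P) (x : EuclideanSpace ℝ (Fin d)) :
    ∫ a, ‖x - a‖ * gaussPdf d σ (x - a) ∂P
      ≤ (‖x‖ + ∫ a, ‖a‖ ∂P) * ∫ a, gaussPdf d σ (x - a) ∂P := by
  have hdist_int : Integrable (fun a => ‖x - a‖) P :=
    ((integrable_const ‖x‖).add hP1).mono' (by fun_prop : Continuous _).aestronglyMeasurable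
      (ae_of_all _ fun a => (norm_norm _).trans_le (norm_sub_le x a))
  calc ∫ a, ‖x - a‖ * gaussPdf d σ (x - a) ∂P
      ≤ (∫ a, ‖x - a‖ ∂P) * ∫ a, gaussPdf d σ (x - a) ∂P :=
        (gaussPdf.antivary_norm.symm.comp_right (x - ·)).integral_mul_le_mul_integral hdist_int
          (integrable_gaussPdf_sub P x) <| hdist_int.mul_bdd
            (integrable_gaussPdf_sub P x).aestronglyMeasurable <| ae_of_all _
              fun a => gaussPdf.norm_le_apply_zero _
    _ ≤ (‖x‖ + ∫ a, ‖a‖ ∂P) * ∫ a, gaussPdf d σ (x - a) ∂P := by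
        gcongr
        · exact integral_nonneg fun a => gaussPdf.nonneg _
        · calc ∫ a, ‖x - a‖ ∂P ≤ ∫ a, (‖x‖ + ‖a‖) ∂P :=
                integral_mono hdist_int ((integrable_const _).add hP1) fun a => norm_sub_le x a
            _ = ‖x‖ + ∫ a, ‖a‖ ∂P := by
                rw [integral_add (integrable_const _) hP1, integral_const, probReal_univ,
                  one_smul]

theorem norm_integral_gradient_gaussPdf_sub_le [IsProbabilityMeasure P]
    (hP1 : Integrable (fun y => ‖y‖) P) (x : EuclideanSpace ℝ (Fin d)) :
    ‖∫ a, -(gaussPdf d σ (x - a) / σ ^ 2) • (x - a) ∂P‖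
      ≤ (‖x‖ + ∫ a, ‖a‖ ∂P) * (∫ a, gaussPdf d σ (x - a) ∂P) / σ ^ 2 :=
  calc ‖∫ a, -(gaussPdf d σ (x - a) / σ ^ 2) • (x - a) ∂P‖
      ≤ ∫ a, ‖-(gaussPdf d σ (x - a) / σ ^ 2) • (x - a)‖ ∂P := norm_integral_le_integral_norm _
    _ = (∫ a, ‖x - a‖ * gaussPdf d σ (x - a) ∂P) / σ ^ 2 := by
        simp_rw [gaussPdf.norm_smul_self]
        exact integral_div _ _
    _ ≤ _ := by
        gcongr
        exact integral_norm_sub_mul_gaussPdf_sub_le P hP1 x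

end smoothing

theorem gradient_log_smoothed_density_bound_general
    {d : ℕ} (σ : ℝ) (hσ : 0 < σ)
    (P : Measure (EuclideanSpace ℝ (Fin d))) [IsProbabilityMeasure P]
    (hP1 : Integrable (fun y => ‖y‖) P)
    (m : EuclideanSpace ℝ (Fin d) → ℝ)
    (hm : ∀ x, m x = ∫ y, gaussPdf d σ (x - y) ∂P) :
    ∀ x, ‖gradient (fun y => Real.log (m y)) x‖
      ≤ (1 / σ ^ 2) * (‖x‖ + ∫ y, ‖y‖ ∂P) := by
  intro x
  obtain rfl : m = fun y => ∫ a, gaussPdf d σ (y - a) ∂P := funext hm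
  have hmx := integral_gaussPdf_sub_pos P hσ x
  rw [((hasGradientAt_integral_gaussPdf_sub P hσ x).log hmx.ne').gradient, norm_smul, norm_inv,
    Real.norm_of_nonneg hmx.le]
  calc _ ≤ (∫ a, gaussPdf d σ (x - a) ∂P)⁻¹ *
        ((‖x‖ + ∫ a, ‖a‖ ∂P) * (∫ a, gaussPdf d σ (x - a) ∂P) / σ ^ 2) := by
        gcongr
        exact norm_integral_gradient_gaussPdf_sub_le P hP1 x
    _ = _ := by field_simp

/-- For `U ∼ P` on `ℝ^d` with `E‖U‖ < ∞` and independent `Z ∼ N(0,σ²I)`, the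
density `m` of `U + Z` satisfies `‖∇ log m(x)‖ ≤ (1/σ²)(‖x‖ + E‖U‖)` for all `x`. -/
theorem gradient_log_smoothed_density_bound
    {d : ℕ} (σ : ℝ) (hσ : 0 < σ)
    (P : Measure (EuclideanSpace ℝ (Fin d))) [IsProbabilityMeasure P]
    (hP1 : Integrable (fun y => ‖y‖) P)
    (m : EuclideanSpace ℝ (Fin d) → ℝ)
    (hm : ∀ x, m x = ∫ y, gaussPdf d σ (x - y) ∂P)
    (hm_pos : ∀ x, 0 < m x) :
    ∀ x, ‖gradient (fun y => Real.log (m y)) x‖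
      ≤ (1 / σ ^ 2) * (‖x‖ + ∫ y, ‖y‖ ∂P) :=
  gradient_log_smoothed_density_bound_general σ hσ P hP1 m hm
end

section
/- In an RKHS H with strictly positive definite kernel k, the minimizer over r of ‖∫k(x,·)p(x)dx − ∫k(x,·)r(x)q(x)dx‖²_H restricted to functions determined by their values on finite samples {x_i^q} from q yields the closed-form empirical estimator r̂ = K_{q,q}^{-1} K_{q,p} 1, where K_{q,q} and K_{q,p} are Gram matrices between samples from q and between samples from q and p. -/
/-!
The empirical objective is the squared distance from the empirical mean embedding
`μ = (1/n) ∑ᵢ Φ(xpᵢ)` to a point `∑ⱼ wⱼ Φ(xqⱼ)` of the span of the features of the `q`-samples.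
Its minimizer is the orthogonal projection of `μ`, characterised by the normal equations
`⟪Φ(xqᵢ), μ - ∑ⱼ wⱼ Φ(xqⱼ)⟫ = 0`, i.e. `K_{q,q} w = K_{q,p} 1`; since `K_{q,q}` is invertible,
`r̂` solves them, and Pythagoras shows it beats every other `w`.
-/

open Matrix
open scoped InnerProductSpace

section LeastSquares

variable {F : Type*} [SeminormedAddCommGroup F] [InnerProductSpace ℝ F]

theorem sq_norm_sub_le_of_inner_sub_eq_zero {u v x : F} (h : ⟪u - v, v - x⟫_ℝ = 0) :
    ‖u - v‖ ^ 2 ≤ ‖u - x‖ ^ 2 := by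
  have hpyth : ‖u - x‖ ^ 2 = ‖u - v‖ ^ 2 + ‖v - x‖ ^ 2 := by
    rw [← sub_add_sub_cancel u v x, norm_add_sq_real, h, mul_zero, add_zero]
  rw [hpyth]
  exact le_add_of_nonneg_right (sq_nonneg _)

variable {ι : Type*} [Fintype ι]

theorem inner_sum_smul_eq_gram_mulVec (e : ι → F) (c : ι → ℝ) (i : ι) :
    ⟪e i, ∑ j, c j • e j⟫_ℝ = (gram ℝ e *ᵥ c) i := by
  simp only [inner_sum, inner_smul_right, mulVec, dotProduct, gram_apply, mul_comm]

theorem sq_norm_sub_sum_smul_le_of_gram_mulVec_eq (e : ι → F) (u : F) {c : ι → ℝ}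
    (hc : gram ℝ e *ᵥ c = fun i => ⟪e i, u⟫_ℝ) (w : ι → ℝ) :
    ‖u - ∑ j, c j • e j‖ ^ 2 ≤ ‖u - ∑ j, w j • e j‖ ^ 2 := by
  have horth : ∀ j, ⟪u - ∑ j, c j • e j, e j⟫_ℝ = 0 := fun j => by
    rw [real_inner_comm, inner_sub_right, inner_sum_smul_eq_gram_mulVec, hc, sub_self]
  apply sq_norm_sub_le_of_inner_sub_eq_zero
  rw [← Finset.sum_sub_distrib, inner_sum]
  exact Finset.sum_eq_zero fun j _ => by rw [← sub_smul, inner_smul_right, horth, mul_zero]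

end LeastSquares

theorem mmd_dre_closed_form_general
    {α : Type*} {H : Type*} [NormedAddCommGroup H] [InnerProductSpace ℝ H]
    (Φ : α → H) (k : α → α → ℝ)
    (hk : ∀ x y, k x y = inner ℝ (Φ x) (Φ y))
    (n m : ℕ)
    (xp : Fin n → α) (xq : Fin m → α)
    (Kqq : Matrix (Fin m) (Fin m) ℝ) (Kqp : Matrix (Fin m) (Fin n) ℝ)
    (hKqq : ∀ i j, Kqq i j = k (xq i) (xq j))
    (hKqp : ∀ i j, Kqp i j = k (xq i) (xp j))
    (hKqq_pd : Kqq.PosDef)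
    (rhat : Fin m → ℝ)
    (hrhat : rhat = Kqq⁻¹.mulVec (Kqp.mulVec fun _ => (1 : ℝ) / n)) :
    ∀ w : Fin m → ℝ,
      ‖(1 / (n : ℝ)) • (∑ i, Φ (xp i)) - ∑ j, rhat j • Φ (xq j)‖ ^ 2
        ≤ ‖(1 / (n : ℝ)) • (∑ i, Φ (xp i)) - ∑ j, w j • Φ (xq j)‖ ^ 2 := by
  have hgram : Kqq = gram ℝ (Φ ∘ xq) := by
    ext i j
    simp only [hKqq, hk, gram_apply, Function.comp_apply]
  have hmean : Kqp *ᵥ (fun _ => (1 : ℝ) / n)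
      = fun i => ⟪Φ (xq i), (1 / (n : ℝ)) • ∑ i, Φ (xp i)⟫_ℝ := by
    ext i
    simp only [mulVec, dotProduct, hKqp, hk, inner_smul_right, inner_sum, Finset.mul_sum,
      mul_comm]
  have hnormal : Kqq *ᵥ rhat = Kqp *ᵥ (fun _ => (1 : ℝ) / n) := by
    rw [hrhat, mulVec_mulVec,
      mul_nonsing_inv _ ((isUnit_iff_isUnit_det _).mp hKqq_pd.isUnit), one_mulVec]
  exact sq_norm_sub_sum_smul_le_of_gram_mulVec_eq (Φ ∘ xq) _ (hgram ▸ hnormal.trans hmean)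

/-- In an RKHS `H` with (strictly positive definite) kernel
`k x y = ⟪Φ x, Φ y⟫`, the minimizer over weight vectors `w` (the values of `r` on the
samples from `q`) of the empirical objective
`‖(1/n)∑ᵢ Φ(xpᵢ) − ∑ⱼ wⱼ • Φ(xqⱼ)‖²_H` is the closed-form estimator
`r̂ = K_{q,q}⁻¹ K_{q,p} 1`, where `1` is the all-ones vector scaled by `1/n`,
`(K_{q,q})_{ij} = k(xqᵢ, xqⱼ)`, `(K_{q,p})_{ij} = k(xqᵢ, xpⱼ)`, and `K_{q,q}` is positive
definite (hence invertible) since `k` is strictly positive definite and the samples are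
distinct. -/
theorem mmd_dre_closed_form
    {α : Type*} {H : Type*} [NormedAddCommGroup H] [InnerProductSpace ℝ H]
    (Φ : α → H) (k : α → α → ℝ)
    (hk : ∀ x y, k x y = inner ℝ (Φ x) (Φ y))
    (n m : ℕ) (hn : 0 < n)
    (xp : Fin n → α) (xq : Fin m → α)
    (Kqq : Matrix (Fin m) (Fin m) ℝ) (Kqp : Matrix (Fin m) (Fin n) ℝ)
    (hKqq : ∀ i j, Kqq i j = k (xq i) (xq j))
    (hKqp : ∀ i j, Kqp i j = k (xq i) (xp j))
    (hKqq_pd : Kqq.PosDef)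
    (rhat : Fin m → ℝ)
    (hrhat : rhat = Kqq⁻¹.mulVec (Kqp.mulVec fun _ => (1 : ℝ) / n)) :
    ∀ w : Fin m → ℝ,
      ‖(1 / (n : ℝ)) • (∑ i, Φ (xp i)) - ∑ j, rhat j • Φ (xq j)‖ ^ 2
        ≤ ‖(1 / (n : ℝ)) • (∑ i, Φ (xp i)) - ∑ j, w j • Φ (xq j)‖ ^ 2 :=
  mmd_dre_closed_form_general Φ k hk n m xp xq Kqq Kqp hKqq hKqp hKqq_pd rhat hrhat
end
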